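/- When a = −2, the correlation coefficient of y and y+ε equals 1 − 2(1−R²)/(1+b). -/

import Mathlib

/-!
The residual `e` is orthogonal to the column space of `X`, which contains the constants, and `u`
is orthogonal to it and to `e`. Hence, with `d = y - ȳ 1`, we have `d ⬝ e = ‖e‖²` and `d ⬝ u = 0`,
so `d ⬝ ε = -2‖e‖²/(1+b)` and `‖ε‖² = 4‖e‖²/(1+b)`. These two values make `‖d + ε‖ = ‖d‖`, and the
correlation collapses to `d ⬝ (d + ε) / ‖d‖² = 1 - 2‖e‖²/((1+b)‖d‖²)`.
-/

open Matrix BigOperators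

/-- Euclidean norm of a vector in ℝⁿ. -/
noncomputable def nrm {n : ℕ} (v : Fin n → ℝ) : ℝ := Real.sqrt (v ⬝ᵥ v)

section Regression

variable {m k : Type*} [Fintype m] [Fintype k] {X : Matrix m k ℝ}

theorem transpose_mulVec_residual_eq_zero [DecidableEq k] (hX : IsUnit (Xᵀ * X).det) (y : m → ℝ) :
    Xᵀ *ᵥ (y - X *ᵥ ((Xᵀ * X)⁻¹ *ᵥ (Xᵀ *ᵥ y))) = 0 := by
  rw [mulVec_sub, mulVec_mulVec, mulVec_mulVec, mul_nonsing_inv _ hX, one_mulVec, sub_self]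

theorem dotProduct_mulVec_eq_zero_of_transpose_mulVec_eq_zero {v : m → ℝ} (hv : Xᵀ *ᵥ v = 0)
    (w : k → ℝ) : v ⬝ᵥ X *ᵥ w = 0 := by
  rw [dotProduct_mulVec, ← mulVec_transpose, hv, zero_dotProduct]

theorem dotProduct_sub_const_eq_dotProduct_residual [DecidableEq k] {v : m → ℝ}
    (hv : Xᵀ *ᵥ v = 0) {j : k} (hj : ∀ i, X i j = 1) (y : m → ℝ) (c : ℝ) (β : k → ℝ) :
    v ⬝ᵥ (y - fun _ => c) = v ⬝ᵥ (y - X *ᵥ β) := by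
  have hconst : X *ᵥ Pi.single j c = fun _ => c := by
    ext i
    simp [mulVec, dotProduct_single, hj]
  have hsplit : (y - fun _ => c) = (y - X *ᵥ β) + X *ᵥ (β - Pi.single j c) := by
    rw [mulVec_sub, hconst]
    abel
  rw [hsplit, dotProduct_add, dotProduct_mulVec_eq_zero_of_transpose_mulVec_eq_zero hv, add_zero]

end Regression

section Perturbation

variable {n : ℕ}

theorem nrm_mul_self (v : Fin n → ℝ) : nrm v * nrm v = v ⬝ᵥ v :=
  Real.mul_self_sqrt (Finset.sum_nonneg fun i _ => mul_self_nonneg (v i))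

theorem nrm_sq (v : Fin n → ℝ) : nrm v ^ 2 = v ⬝ᵥ v := by
  rw [sq, nrm_mul_self]

theorem nrm_ne_zero {v : Fin n → ℝ} (hv : v ≠ 0) : nrm v ≠ 0 := by
  intro h
  apply hv
  rw [← dotProduct_self_eq_zero, ← nrm_mul_self, h, mul_zero]

theorem nrm_smul_inv_nrm_smul (v : Fin n → ℝ) : nrm v • ((nrm v)⁻¹ • v) = v := by
  rcases eq_or_ne v 0 with rfl | hv
  · simp
  · rw [smul_smul, mul_inv_cancel₀ (nrm_ne_zero hv), one_smul]

/-- The perturbation `ε` of the response, for the parameter value `a = -2`. -/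
noncomputable def perturbation (e u : Fin n → ℝ) (b : ℝ) : Fin n → ℝ :=
  ((-2 : ℝ) * nrm e / (1 + b)) • ((nrm e)⁻¹ • e + Real.sqrt b • ((nrm u)⁻¹ • u))

variable {d e u : Fin n → ℝ} {b : ℝ}

theorem perturbation_eq_add (e u : Fin n → ℝ) (b : ℝ) :
    perturbation e u b =
      (-2 / (1 + b)) • e + (-2 * nrm e * Real.sqrt b / (1 + b) / nrm u) • u := by
  have he : ((-2 : ℝ) * nrm e / (1 + b)) • ((nrm e)⁻¹ • e) = (-2 / (1 + b)) • e := by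
    rw [mul_div_right_comm, ← smul_smul, nrm_smul_inv_nrm_smul]
  rw [perturbation, smul_add, he, smul_smul, smul_smul]
  congr 2
  ring

theorem dotProduct_perturbation (hde : d ⬝ᵥ e = e ⬝ᵥ e) (hdu : d ⬝ᵥ u = 0) :
    d ⬝ᵥ perturbation e u b = -2 * (e ⬝ᵥ e) / (1 + b) := by
  rw [perturbation_eq_add, dotProduct_add, dotProduct_smul, dotProduct_smul, hde, hdu,
    smul_eq_mul, smul_eq_mul, mul_zero, add_zero]
  ring

theorem perturbation_dotProduct_self (heu : e ⬝ᵥ u = 0) (hu : u ≠ 0) (hb : 0 ≤ b) :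
    perturbation e u b ⬝ᵥ perturbation e u b = 4 * (e ⬝ᵥ e) / (1 + b) := by
  have hu' := nrm_ne_zero hu
  have hb' : 1 + b ≠ 0 := by positivity
  rw [perturbation_eq_add]
  simp only [dotProduct_add, add_dotProduct, dotProduct_smul, smul_dotProduct, smul_eq_mul,
    heu, dotProduct_comm u e, ← nrm_mul_self u, ← nrm_mul_self e, mul_zero, add_zero, zero_add]
  field_simp
  rw [Real.sq_sqrt hb]
  ring

theorem nrm_add_perturbation (hde : d ⬝ᵥ e = e ⬝ᵥ e) (hdu : d ⬝ᵥ u = 0) (heu : e ⬝ᵥ u = 0)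
    (hu : u ≠ 0) (hb : 0 ≤ b) : nrm (d + perturbation e u b) = nrm d := by
  have hb' : 1 + b ≠ 0 := by positivity
  have hsq : (d + perturbation e u b) ⬝ᵥ (d + perturbation e u b) = d ⬝ᵥ d := by
    rw [dotProduct_add, add_dotProduct, add_dotProduct, dotProduct_comm (perturbation e u b) d,
      dotProduct_perturbation hde hdu, perturbation_dotProduct_self heu hu hb]
    field_simp
    ring
  rw [nrm, nrm, hsq]

theorem correlation_add_perturbation (hd : d ≠ 0) (hde : d ⬝ᵥ e = e ⬝ᵥ e) (hdu : d ⬝ᵥ u = 0)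
    (heu : e ⬝ᵥ u = 0) (hu : u ≠ 0) (hb : 0 ≤ b) :
    d ⬝ᵥ (d + perturbation e u b) / (nrm d * nrm (d + perturbation e u b)) =
      1 - 2 * (nrm e ^ 2 / nrm d ^ 2) / (1 + b) := by
  have hd' : d ⬝ᵥ d ≠ 0 := dotProduct_self_eq_zero.not.mpr hd
  have hb' : 1 + b ≠ 0 := by positivity
  rw [nrm_add_perturbation hde hdu heu hu hb, nrm_mul_self, nrm_sq, nrm_sq, dotProduct_add,
    dotProduct_perturbation hde hdu]
  field_simp
  ring

end Perturbation

theorem correlation_a_eq_neg_two_general {n p : ℕ}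
    (X : Matrix (Fin n) (Fin (p + 1)) ℝ)
    (hX : IsUnit (Xᵀ * X).det)
    (hone : ∃ j, ∀ i, X i j = 1)
    (y e : Fin n → ℝ)
    (he : e = y - X.mulVec ((Xᵀ * X)⁻¹.mulVec (Xᵀ.mulVec y)))
    (ybar : ℝ)
    (hy : y ≠ fun _ => ybar)
    (R2 : ℝ) (hR2 : R2 = 1 - (nrm e) ^ 2 / (nrm (y - fun _ => ybar)) ^ 2)
    (u : Fin n → ℝ) (hu0 : u ≠ 0)
    (hXu : Xᵀ.mulVec u = 0) (heu : e ⬝ᵥ u = 0)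
    (b : ℝ) (hb : 0 < b)
    (ε : Fin n → ℝ)
    (hε : ε = ((-2 : ℝ) * nrm e / (1 + b)) •
        ((nrm e)⁻¹ • e + Real.sqrt b • ((nrm u)⁻¹ • u)))
    (r : ℝ)
    (hr : r = (y - fun _ => ybar) ⬝ᵥ (y + ε - fun _ => ybar) /
        (nrm (y - fun _ => ybar) * nrm (y + ε - fun _ => ybar))) :
    r = 1 - 2 * (1 - R2) / (1 + b) := by
  obtain ⟨j, hj⟩ := hone
  have hXe : Xᵀ *ᵥ e = 0 := he ▸ transpose_mulVec_residual_eq_zero hX y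
  have hde : (y - fun _ => ybar) ⬝ᵥ e = e ⬝ᵥ e := by
    rw [dotProduct_comm, dotProduct_sub_const_eq_dotProduct_residual hXe hj, ← he]
  have hdu : (y - fun _ => ybar) ⬝ᵥ u = 0 := by
    rw [dotProduct_comm, dotProduct_sub_const_eq_dotProduct_residual hXu hj, ← he,
      dotProduct_comm, heu]
  have hshift : y + ε - (fun _ => ybar) = (y - fun _ => ybar) + ε := add_sub_right_comm _ _ _
  rw [hr, hR2, sub_sub_cancel, hshift, hε]
  exact correlation_add_perturbation (sub_ne_zero.mpr hy) hde hdu heu hu0 hb.le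

/-- When a = −2, the correlation coefficient of y and y+ε
equals 1 − 2(1−R²)/(1+b). -/
theorem correlation_a_eq_neg_two {n p : ℕ}
    (X : Matrix (Fin n) (Fin (p + 1)) ℝ)
    (hX : IsUnit (Xᵀ * X).det)
    (hone : ∃ j, ∀ i, X i j = 1)
    (y e : Fin n → ℝ)
    (he : e = y - X.mulVec ((Xᵀ * X)⁻¹.mulVec (Xᵀ.mulVec y)))
    (he0 : e ≠ 0)
    (ybar : ℝ) (hybar : ybar = (∑ i, y i) / (n : ℝ))
    (hy : y ≠ fun _ => ybar)
    (R2 : ℝ) (hR2 : R2 = 1 - (nrm e) ^ 2 / (nrm (y - fun _ => ybar)) ^ 2)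
    (u : Fin n → ℝ) (hu0 : u ≠ 0)
    (hXu : Xᵀ.mulVec u = 0) (heu : e ⬝ᵥ u = 0)
    (b : ℝ) (hb : 0 < b)
    (ε : Fin n → ℝ)
    (hε : ε = ((-2 : ℝ) * nrm e / (1 + b)) •
        ((nrm e)⁻¹ • e + Real.sqrt b • ((nrm u)⁻¹ • u)))
    (r : ℝ)
    (hr : r = (y - fun _ => ybar) ⬝ᵥ (y + ε - fun _ => ybar) /
        (nrm (y - fun _ => ybar) * nrm (y + ε - fun _ => ybar))) :
    r = 1 - 2 * (1 - R2) / (1 + b) :=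
  correlation_a_eq_neg_two_general X hX hone y e he ybar hy R2 hR2 u hu0 hXu heu b hb ε hε r hr
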